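/- Let X be the p-biased distribution on {0,1}^n with p ≤ 1/2 and H(p) = 2m/n for parameters m,n with m ≤ n/6. Define X̄ by: sample X; if |X| ≥ 0.9pn set X̄ = X, else let X̄ be uniform on {0,1}^n. Then X̄ has min-entropy at least 1.5m, i.e., Pr[X̄ = a] ≤ 2^{−1.5m} for every a ∈ {0,1}^n (for m sufficiently large, e.g. 2^{−1.8m} + 2^{−n} ≤ 2^{−1.5m}). -/

import Mathlib

open Finset
open scoped Classical

/-- The binary entropy function. -/
noncomputable def binEnt (p : ℝ) : ℝ :=
  -(p * Real.logb 2 p) - (1 - p) * Real.logb 2 (1 - p)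

/-- Hamming weight of a Boolean vector. -/
def wtB {n : ℕ} (y : Fin n → Bool) : ℕ := (univ.filter (fun i => y i)).card

/-- The `p`-biased product distribution on `{0,1}^n`. -/
noncomputable def pBiased (n : ℕ) (p : ℝ) (x : Fin n → Bool) : ℝ :=
  ∏ i, if x i then p else 1 - p

/-!
A point of weight `w ≥ 0.9pn` has `p`-biased probability `p^w (1-p)^(n-w)`, which for `p ≤ 1/2`
decreases in `w`; hence it is at most `p^{0.9pn} (1-p)^{0.9(1-p)n} = 2^{-0.9 n H(p)} = 2^{-1.8m}`.
Points of smaller weight are only reached through the uniform branch, which contributes at most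
`2^{-n}`.
-/

lemma wtB_le {n : ℕ} (x : Fin n → Bool) : wtB x ≤ n := by
  simpa [wtB] using card_filter_le (univ : Finset (Fin n)) (fun i => x i)

lemma pBiased_eq_pow (n : ℕ) (p : ℝ) (x : Fin n → Bool) :
    pBiased n p x = p ^ wtB x * (1 - p) ^ (n - wtB x) := by
  have hcard := card_filter_add_card_filter_not (s := (univ : Finset (Fin n))) (fun i => x i)
  rw [card_univ, Fintype.card_fin] at hcard
  rw [pBiased, prod_ite, prod_const, prod_const, wtB]
  congr 2
  omega

lemma pBiased_eq_rpow (n : ℕ) (p : ℝ) (x : Fin n → Bool) :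
    pBiased n p x = p ^ (wtB x : ℝ) * (1 - p) ^ ((n : ℝ) - wtB x) := by
  rw [pBiased_eq_pow, Real.rpow_natCast, ← Nat.cast_sub (wtB_le x), Real.rpow_natCast]

lemma pBiased_nonneg (n : ℕ) {p : ℝ} (hp0 : 0 ≤ p) (hp1 : p ≤ 1) (x : Fin n → Bool) :
    0 ≤ pBiased n p x :=
  prod_nonneg fun i _ => by split_ifs <;> linarith

lemma sum_pBiased (n : ℕ) (p : ℝ) : ∑ x : Fin n → Bool, pBiased n p x = 1 := by
  simp only [pBiased]
  rw [← Fintype.prod_sum (fun (_ : Fin n) (b : Bool) => if b then p else 1 - p)]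
  simp

lemma sum_pBiased_le_one (n : ℕ) {p : ℝ} (hp0 : 0 ≤ p) (hp1 : p ≤ 1)
    (s : Finset (Fin n → Bool)) : ∑ x ∈ s, pBiased n p x ≤ 1 :=
  sum_pBiased n p ▸
    sum_le_sum_of_subset_of_nonneg (subset_univ s) fun x _ _ => pBiased_nonneg n hp0 hp1 x

lemma rpow_mul_one_sub_rpow_le_of_le {p t w : ℝ} (N : ℝ) (hp0 : 0 < p) (hpq : p ≤ 1 - p)
    (htw : t ≤ w) :
    p ^ w * (1 - p) ^ (N - w) ≤ p ^ t * (1 - p) ^ (N - t) := by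
  have hq0 : 0 < 1 - p := hp0.trans_le hpq
  calc p ^ w * (1 - p) ^ (N - w) = p ^ t * (p ^ (w - t) * (1 - p) ^ (N - w)) := by
        rw [← mul_assoc, ← Real.rpow_add hp0, add_sub_cancel]
    _ ≤ p ^ t * ((1 - p) ^ (w - t) * (1 - p) ^ (N - w)) := by
        gcongr
    _ = p ^ t * (1 - p) ^ (N - t) := by
        rw [← Real.rpow_add hq0, sub_add_sub_cancel']

lemma rpow_mul_one_sub_rpow_eq_two_rpow_binEnt {p : ℝ} (c : ℝ) (hp0 : 0 < p) (hp1 : p < 1) :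
    p ^ (c * p) * (1 - p) ^ (c * (1 - p)) = (2 : ℝ) ^ (-c * binEnt p) := by
  have hlog (q : ℝ) (hq : 0 < q) (e : ℝ) : q ^ e = (2 : ℝ) ^ (Real.logb 2 q * e) := by
    rw [Real.rpow_mul zero_le_two, Real.rpow_logb zero_lt_two (by norm_num) hq]
  rw [hlog p hp0, hlog (1 - p) (by linarith), ← Real.rpow_add zero_lt_two, binEnt]
  ring_nf

lemma pBiased_le_two_rpow_of_le_wtB {n : ℕ} {p c : ℝ} (hp0 : 0 < p) (hp : p ≤ 1 / 2)
    (hc : c ≤ 1) {a : Fin n → Bool} (hw : c * p * n ≤ wtB a) :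
    pBiased n p a ≤ (2 : ℝ) ^ (-(c * n) * binEnt p) := by
  have hq0 : 0 < 1 - p := by linarith
  have hexp : c * n * (1 - p) ≤ n - c * n * p := by nlinarith [(n.cast_nonneg : (0 : ℝ) ≤ n)]
  calc pBiased n p a ≤ p ^ (c * p * n) * (1 - p) ^ ((n : ℝ) - c * p * n) := by
        rw [pBiased_eq_rpow]
        exact rpow_mul_one_sub_rpow_le_of_le _ hp0 (by linarith) hw
    _ ≤ p ^ (c * n * p) * (1 - p) ^ (c * n * (1 - p)) := by
        rw [mul_right_comm c p]
        exact mul_le_mul_of_nonneg_left (Real.rpow_le_rpow_of_exponent_ge hq0 (by linarith) hexp)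
          (by positivity)
    _ = (2 : ℝ) ^ (-(c * n) * binEnt p) :=
        rpow_mul_one_sub_rpow_eq_two_rpow_binEnt _ hp0 (by linarith)

/-- Let `X` be `p`-biased with `H(p) = 2m/n`, `m ≤ n/6`, and let `X̄ = X` when
`|X| ≥ 0.9pn` and uniform otherwise.  Then (for `m` large enough that
`2^{−1.8m}+2^{−n} ≤ 2^{−1.5m}`) `X̄` has min-entropy at least `1.5m`:
`Pr[X̄ = a] ≤ 2^{−1.5m}` for every `a`. -/
theorem stmt7 (n m : ℕ) (p : ℝ) (hp0 : 0 < p) (hp : p ≤ 1/2)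
    (hH : binEnt p = 2 * m / n) (hmn : (m:ℝ) ≤ (n:ℝ) / 6)
    (hlarge : (2:ℝ) ^ (-(1.8:ℝ) * m) + (2:ℝ) ^ (-(n:ℝ)) ≤ (2:ℝ) ^ (-(1.5:ℝ) * m)) :
    ∀ a : Fin n → Bool,
      (if (0.9:ℝ) * p * n ≤ (wtB a : ℝ) then pBiased n p a else 0)
        + (∑ x ∈ univ.filter (fun x : Fin n → Bool => (wtB x : ℝ) < 0.9 * p * n),
            pBiased n p x) * ((2:ℝ)^n)⁻¹
      ≤ (2:ℝ) ^ (-(1.5:ℝ) * m) := by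
  intro a
  have hentropy : (0.9 : ℝ) * n * binEnt p = 1.8 * m := by
    rcases eq_or_ne (n : ℝ) 0 with hn | hn
    · -- here `hH` carries no information, since `2 * m / 0 = 0`
      have hm : (m : ℝ) = 0 := le_antisymm (by simpa [hn] using hmn) m.cast_nonneg
      simp [hn, hm]
    · rw [hH]
      field_simp
      ring
  refine le_trans (add_le_add ?_ ?_) hlarge
  · split_ifs with hw
    · have := pBiased_le_two_rpow_of_le_wtB hp0 hp (by norm_num) hw
      rwa [neg_mul, hentropy, ← neg_mul] at this
    · positivity
  · rw [Real.rpow_neg zero_le_two, Real.rpow_natCast]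
    exact mul_le_of_le_one_left (by positivity)
      (sum_pBiased_le_one n hp0.le (by linarith) _)
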